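/- Let a_{α,0} = 2Γ(2α)cos(πα)/(Γ(α)²cos(πα/2)²) for α ∈ (−1, 0). Then a_{α,0} = α + O(α³) as α → 0⁻; that is, there exist constants C > 0 and r > 0 such that |a_{α,0} − α| ≤ C·|α|³ for all α with −r < α < 0. -/

import Mathlib

/-!
By the reflection formula `Γ(s)Γ(1-s) = π / sin(πs)`, applied at `α` and `2α`, together with the
double-angle formulas, `a_{α,0} = (2/π) tan(πα/2) · G(α)` with `G(α) = Γ(1-α)² / Γ(1-2α)`.
The first factor is `α + O(α³)` by the Taylor expansion of `tan`. The function `G` is analytic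
at `0` with `G(0) = 1`, and `G'(0) = 0` since the two contributions `∓2Γ'(1)` of numerator and
denominator cancel (whatever the value `Γ'(1) = -γ`), so `G(α) = 1 + O(α²)`.
-/

open Real Filter Topology Asymptotics

theorem AnalyticAt.isBigO_sub_sq_of_deriv_eq_zero {𝕜 E : Type*} [NontriviallyNormedField 𝕜]
    [NormedAddCommGroup E] [NormedSpace 𝕜 E] {f : 𝕜 → E} {x : 𝕜} (hf : AnalyticAt 𝕜 f x)
    (hd : deriv f x = 0) : (fun y => f (x + y) - f x) =O[𝓝 0] fun y => y ^ 2 := by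
  obtain ⟨p, hp⟩ := hf
  have hc1 : p.coeff 1 = 0 := hp.deriv.symm.trans hd
  have hsum : ∀ y, p.partialSum 2 y = f x := fun y => by
    simpa [FormalMultilinearSeries.partialSum, Finset.sum_range_succ, hc1] using hp.coeff_zero 1
  refine isBigO_norm_right.mp ?_
  simpa only [hsum, norm_pow] using hp.isBigO_sub_partialSum_pow 2

theorem Real.analyticAt_Gamma {x : ℝ} (hx : 0 < x) : AnalyticAt ℝ Gamma x := by
  have hC : AnalyticAt ℂ Complex.Gamma x := by
    refine DifferentiableOn.analyticAt (s := {z : ℂ | 0 < z.re}) (fun z hz => ?_)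
      ((isOpen_lt continuous_const Complex.continuous_re).mem_nhds (by simpa using hx))
    refine (Complex.differentiableAt_Gamma z fun m hm => ?_).differentiableWithinAt
    have : 0 < (-(m : ℂ)).re := hm ▸ hz
    simp at this
    linarith [(m.cast_nonneg : (0:ℝ) ≤ m)]
  simpa [Complex.Gamma_ofReal] using hC.re_ofReal

theorem Real.abs_sin_sub_mul_cos_le {x : ℝ} (hx : |x| ≤ 1) : |sin x - x * cos x| ≤ |x| ^ 3 := by
  have hs := Real.sin_bound hx
  have hc := Real.cos_bound hx
  have h53 : |x| ^ 5 ≤ |x| ^ 3 := pow_le_pow_of_le_one (abs_nonneg x) hx (by norm_num)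
  calc |sin x - x * cos x|
      = |(sin x - (x - x ^ 3 / 6)) - x * (cos x - (1 - x ^ 2 / 2)) + x ^ 3 / 3| := by ring_nf
    _ ≤ |x| ^ 5 / 100 + |x| * (|x| ^ 4 * (5 / 96)) + |x| ^ 3 / 3 := by
      refine (abs_add_le _ _).trans (add_le_add ((abs_sub _ _).trans (add_le_add hs ?_)) ?_)
      · rw [abs_mul]; gcongr
      · rw [abs_div, abs_pow]; norm_num
    _ ≤ |x| ^ 3 := by
      have : |x| * (|x| ^ 4 * (5 / 96)) = 5 / 96 * |x| ^ 5 := by ring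
      linarith [pow_nonneg (abs_nonneg x) 3]

theorem Real.tan_sub_self_isBigO : (fun x => tan x - x) =O[𝓝 0] fun x => x ^ 3 := by
  have hnum : (fun x => sin x - x * cos x) =O[𝓝 0] fun x => x ^ 3 := by
    refine IsBigO.of_bound 1 ?_
    filter_upwards [Metric.closedBall_mem_nhds (0 : ℝ) one_pos] with x hx
    simpa [abs_pow] using Real.abs_sin_sub_mul_cos_le (by simpa using hx)
  have hden : (fun x => (cos x)⁻¹) =O[𝓝 0] fun _ => (1 : ℝ) :=
    ((continuous_cos.tendsto 0).inv₀ (by simp)).isBigO_one ℝ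
  refine (hnum.mul hden).congr' ?_ (by simp)
  filter_upwards [continuous_cos.continuousAt.eventually_ne (by simp : cos 0 ≠ 0)] with x hx
  rw [tan_eq_sin_div_cos]
  field_simp

theorem two_div_pi_mul_tan_sub_self_isBigO :
    (fun α => 2 / π * tan (π * α / 2) - α) =O[𝓝 0] fun α => α ^ 3 := by
  have hlin : Tendsto (fun α : ℝ => π * α / 2) (𝓝 0) (𝓝 0) := by
    simpa using ((continuous_const.mul continuous_id).div_const 2).tendsto (0 : ℝ)
  have hcube : (fun α : ℝ => (π * α / 2) ^ 3) =O[𝓝 0] fun α => α ^ 3 :=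
    ((isBigO_refl _ _).const_mul_left ((π / 2) ^ 3)).congr_left fun α => by ring
  refine (((Real.tan_sub_self_isBigO.comp_tendsto hlin).const_mul_left (2 / π)).trans
    hcube).congr_left fun α => ?_
  simp only [Function.comp]
  field_simp

noncomputable def gammaRatio (α : ℝ) : ℝ := Gamma (1 - α) ^ 2 / Gamma (1 - 2 * α)

theorem Real.analyticAt_Gamma_one_sub_mul (c : ℝ) : AnalyticAt ℝ (fun α => Gamma (1 - c * α)) 0 :=
  (Real.analyticAt_Gamma one_pos).comp_of_eq (by fun_prop) (by simp)

theorem Real.hasDerivAt_Gamma_one_sub_mul (c : ℝ) :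
    HasDerivAt (fun α => Gamma (1 - c * α)) (-(c * deriv Gamma 1)) 0 := by
  have hΓ := (Real.analyticAt_Gamma one_pos).differentiableAt.hasDerivAt
  exact (hΓ.comp_of_eq 0 (((hasDerivAt_id 0).const_mul c).const_sub 1) (by simp)).congr_deriv
    (by ring)

theorem analyticAt_gammaRatio_zero : AnalyticAt ℝ gammaRatio 0 :=
  ((Real.analyticAt_Gamma_one_sub_mul 1).pow 2).div (Real.analyticAt_Gamma_one_sub_mul 2) (by simp)
    |>.congr (by filter_upwards with α; simp [gammaRatio])

theorem deriv_gammaRatio_zero : deriv gammaRatio 0 = 0 := by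
  have h := ((Real.hasDerivAt_Gamma_one_sub_mul 1).fun_pow 2).fun_div
    (Real.hasDerivAt_Gamma_one_sub_mul 2) (by simp)
  simp only [one_mul] at h
  rw [show gammaRatio = fun α => Gamma (1 - α) ^ 2 / Gamma (1 - 2 * α) from rfl, h.deriv]
  simp

noncomputable def aCoeff (α : ℝ) : ℝ :=
  2 * Gamma (2 * α) * cos (π * α) / (Gamma α ^ 2 * cos (π * α / 2) ^ 2)

theorem Real.Gamma_eq_pi_div_sin_mul_Gamma_one_sub {s : ℝ} (hs : sin (π * s) ≠ 0) :
    Gamma s = π / (sin (π * s) * Gamma (1 - s)) := by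
  have h := Real.Gamma_mul_Gamma_one_sub s
  have hΓ : Gamma (1 - s) ≠ 0 :=
    right_ne_zero_of_mul (h ▸ div_ne_zero pi_ne_zero hs : Gamma s * Gamma (1 - s) ≠ 0)
  rw [eq_div_iff (mul_ne_zero hs hΓ)]
  rw [eq_div_iff hs] at h
  linear_combination h

theorem aCoeff_eq_tan_mul_gammaRatio {α : ℝ} (hs : sin (π * α) ≠ 0) (hc : cos (π * α) ≠ 0) :
    aCoeff α = 2 / π * tan (π * α / 2) * gammaRatio α := by
  have hsin2 : sin (π * (2 * α)) = 2 * sin (π * α) * cos (π * α) := by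
    rw [mul_left_comm, sin_two_mul]
  have hsin_half : sin (π * α) = 2 * sin (π * α / 2) * cos (π * α / 2) := by
    rw [← sin_two_mul]; ring_nf
  have hs2 : sin (π * (2 * α)) ≠ 0 := by rw [hsin2]; simp [hs, hc]
  rw [aCoeff, gammaRatio, Gamma_eq_pi_div_sin_mul_Gamma_one_sub hs,
    Gamma_eq_pi_div_sin_mul_Gamma_one_sub hs2, tan_eq_sin_div_cos, hsin2, hsin_half]
  field_simp

theorem aCoeff_sub_self_isBigO : (fun α => aCoeff α - α) =O[𝓝[<] 0] fun α => α ^ 3 := by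
  have hG : (fun α => gammaRatio α - 1) =O[𝓝 0] fun α => α ^ 2 := by
    simpa [gammaRatio] using
      analyticAt_gammaRatio_zero.isBigO_sub_sq_of_deriv_eq_zero deriv_gammaRatio_zero
  have hG_bdd : gammaRatio =O[𝓝 0] fun _ => (1 : ℝ) :=
    analyticAt_gammaRatio_zero.continuousAt.tendsto.isBigO_one ℝ
  have htan : (fun α => (2 / π * tan (π * α / 2) - α) * gammaRatio α) =O[𝓝 0] (· ^ 3) := by
    simpa using two_div_pi_mul_tan_sub_self_isBigO.mul hG_bdd
  have hα : (fun α => α * (gammaRatio α - 1)) =O[𝓝 0] (· ^ 3) :=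
    ((isBigO_refl _ _).mul hG).congr_right fun α => by ring
  refine ((htan.add hα).mono nhdsWithin_le_nhds).congr' ?_ EventuallyEq.rfl
  filter_upwards [Ioo_mem_nhdsLT (show (-1 / 2 : ℝ) < 0 by norm_num)] with α ⟨hα₁, hα₂⟩
  have hs : sin (π * α) ≠ 0 :=
    (sin_neg_of_neg_of_neg_pi_lt (by nlinarith [pi_pos]) (by nlinarith [pi_pos])).ne
  have hc : cos (π * α) ≠ 0 :=
    (cos_pos_of_mem_Ioo ⟨by nlinarith [pi_pos], by nlinarith [pi_pos]⟩).ne'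
  rw [aCoeff_eq_tan_mul_gammaRatio hs hc]
  ring

/-- The expansion `a_{α,0} = α + O(α³)` as `α → 0⁻`, where
`a_{α,0} = 2Γ(2α)cos(πα)/(Γ(α)²cos(πα/2)²)`. -/
theorem aCoeff_expansion_at_zero :
    ∃ C : ℝ, 0 < C ∧ ∃ r : ℝ, 0 < r ∧ ∀ α : ℝ, -r < α → α < 0 →
      |2 * Real.Gamma (2*α) * Real.cos (π * α) /
          (Real.Gamma α ^ 2 * Real.cos (π * α / 2) ^ 2) - α| ≤ C * |α| ^ 3 := by
  obtain ⟨C, hC, hbound⟩ := aCoeff_sub_self_isBigO.exists_pos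
  obtain ⟨l, hl, hsub⟩ := mem_nhdsLT_iff_exists_Ioo_subset.1 hbound.bound
  refine ⟨C, hC, -l, neg_pos.2 hl, fun α h₁ h₂ => ?_⟩
  simpa [aCoeff, abs_pow] using hsub ⟨by linarith, h₂⟩
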